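/- Let κ, τ : (0,∞) → ℝ be defined by κ(s) = √5/s and τ(s) = 3√7/(2s). Then for every s > 0 one has κ⁽⁴⁾(s) − 15κ(s)(κ'(s))² − 10κ²(s)κ''(s) + κ⁵(s) − τ²(s)(κ''(s) − 2κ³(s)) = 0. -/

import Mathlib

/-!
For `κ = a/s` and `τ = b/s` every term of the equation is a constant multiple of `s⁻⁵`, since
`κ⁽ᵏ⁾ = (-1)ᵏ k! a s^(-1-k)`. The equation therefore reduces to the polynomial identity
`a⁴ - 35a² + 24 + 2b²(a² - 1) = 0` (or `a = 0`), which holds for `a² = 5`, `b² = 63/4`.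
-/

open Nat

theorem iteratedDeriv_const_div {𝕜 : Type*} [NontriviallyNormedField 𝕜] (c : 𝕜) (k : ℕ)
    (x : 𝕜) :
    iteratedDeriv k (fun s => c / s) x = c * ((-1) ^ k * k ! * x ^ (-1 - k : ℤ)) := by
  simp only [div_eq_mul_inv]
  rw [iteratedDeriv_const_mul_field, iteratedDeriv_eq_iterate, iter_deriv_inv]

noncomputable def triharmonicNormal (κ τ : ℝ → ℝ) (s : ℝ) : ℝ :=
  iteratedDeriv 4 κ s - 15 * κ s * (deriv κ s) ^ 2
    - 10 * (κ s) ^ 2 * iteratedDeriv 2 κ s + (κ s) ^ 5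
    - (τ s) ^ 2 * (iteratedDeriv 2 κ s - 2 * (κ s) ^ 3)

theorem triharmonicNormal_const_div (a b : ℝ) {s : ℝ} (hs : s ≠ 0) :
    triharmonicNormal (fun s => a / s) (fun s => b / s) s
      = a * ((a ^ 2) ^ 2 - 35 * a ^ 2 + 24 + 2 * b ^ 2 * (a ^ 2 - 1)) / s ^ 5 := by
  rw [triharmonicNormal, ← iteratedDeriv_one, iteratedDeriv_const_div, iteratedDeriv_const_div,
    iteratedDeriv_const_div]
  push_cast
  field_simp
  ring

/-- The functions `κ(s) = √5/s` and `τ(s) = 3√7/(2s)` satisfy the normal component of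
the triharmonic equation `κ⁽⁴⁾ − 15κ(κ')² − 10κ²κ'' + κ⁵ − τ²(κ'' − 2κ³) = 0` on `(0,∞)`. -/
theorem stmt_3 (κ τ : ℝ → ℝ)
    (hκ : κ = fun s => Real.sqrt 5 / s)
    (hτ : τ = fun s => 3 * Real.sqrt 7 / (2 * s)) :
    ∀ s : ℝ, 0 < s →
      iteratedDeriv 4 κ s - 15 * κ s * (deriv κ s) ^ 2
        - 10 * (κ s) ^ 2 * iteratedDeriv 2 κ s + (κ s) ^ 5
        - (τ s) ^ 2 * (iteratedDeriv 2 κ s - 2 * (κ s) ^ 3) = 0 := by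
  intro s hs
  have hτ' : τ = fun s => 3 * Real.sqrt 7 / 2 / s := by
    rw [hτ]; funext s; ring
  have ha : Real.sqrt 5 ^ 2 = 5 := Real.sq_sqrt (by norm_num)
  have hb : (3 * Real.sqrt 7 / 2) ^ 2 = 63 / 4 := by
    rw [div_pow, mul_pow, Real.sq_sqrt (by norm_num)]; norm_num
  change triharmonicNormal κ τ s = 0
  rw [hκ, hτ', triharmonicNormal_const_div _ _ hs.ne', ha, hb]
  norm_num
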